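/- arXiv:1708.02425 — 4 statements merged into one kernel-verified Lean document; each statement's English description precedes it below -/
import Mathlib

section
/- For any integer n ≥ 6, let K = ⌈n^{1/3}⌉, M = ⌊K/2⌋, and let S ⊆ ℤ/nℤ be the set {±j, ±jK, ±jK² : 1 ≤ j ≤ M} (reduced mod n). Then |S| ≤ 6⌈n^{1/3}/2⌉ and every element of ℤ/nℤ can be expressed as a sum of at most 3 elements of S; in particular the Cayley graph Cay(ℤ/nℤ, S) has diameter at most 3. -/
/-- `K = ⌈n^{1/3}⌉`. -/
noncomputable def cubeRootCeil (n : ℕ) : ℕ := ⌈(n : ℝ) ^ ((1 : ℝ) / 3)⌉₊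

/-- `M = ⌊K/2⌋`. -/
noncomputable def halfCubeRootCeil (n : ℕ) : ℕ := cubeRootCeil n / 2

/-- The set `S = {±j, ±jK, ±jK² : 1 ≤ j ≤ M} ⊆ ℤ/nℤ`. -/
noncomputable def cyclicGenSet (n : ℕ) : Set (ZMod n) :=
  {z | ∃ j : ℕ, 1 ≤ j ∧ j ≤ halfCubeRootCeil n ∧
    (z = (j : ZMod n) ∨ z = -(j : ZMod n) ∨
      z = (j : ZMod n) * (cubeRootCeil n : ZMod n) ∨
      z = -((j : ZMod n) * (cubeRootCeil n : ZMod n)) ∨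
      z = (j : ZMod n) * (cubeRootCeil n : ZMod n) ^ 2 ∨
      z = -((j : ZMod n) * (cubeRootCeil n : ZMod n) ^ 2))}


/-! Write `M = ⌊K/2⌋`. Since `K ≤ 2M + 1`, balanced base-`K` digits in `[-M, M]` reach every
integer `r` with `|r| ≤ M(1 + K + K²)`, and `2M(1 + K + K²) ≥ K³ - 1 ≥ n - 1`. So the
representative of a residue class of absolute value at most `n/2` is `a + bK + cK²` with
`|a|, |b|, |c| ≤ M`, and the nonzero terms of this sum lie in `S`. -/

open Finset

lemma pow_le_two_mul_mul_geom_sum_add_one {R : Type*} [CommRing R] [LinearOrder R]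
    [IsStrictOrderedRing R] {M K : R} (hK : 0 ≤ K) (hKM : K ≤ 2 * M + 1)
    (d : ℕ) : K ^ d ≤ 2 * M * ∑ i ∈ range d, K ^ i + 1 := by
  have hgeom := geom_sum_mul K d
  have hsum : 0 ≤ ∑ i ∈ range d, K ^ i := sum_nonneg fun i _ => pow_nonneg hK i
  nlinarith

lemma exists_abs_le_abs_sub_mul_le {M Q B r : ℤ} (hM : 0 ≤ M) (hQ : 0 < Q)
    (hQB : Q ≤ 2 * B + 1) (hr : |r| ≤ M * Q + B) : ∃ c, |c| ≤ M ∧ |r - c * Q| ≤ B := by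
  obtain ⟨hr₁, hr₂⟩ := abs_le.1 hr
  set q := (r + B) / Q
  have hlow : q * Q ≤ r + B := Int.ediv_mul_le _ hQ.ne'
  have hhigh : r + B < (q + 1) * Q := Int.lt_ediv_add_one_mul_self _ hQ
  have hq : -M ≤ q := by
    by_contra! h
    nlinarith
  rcases le_total q M with hqM | hMq
  · exact ⟨q, abs_le.2 ⟨hq, hqM⟩, abs_le.2 ⟨by linarith, by linarith⟩⟩
  · exact ⟨M, abs_le.2 ⟨by linarith, le_rfl⟩, abs_le.2 ⟨by nlinarith, by linarith⟩⟩

lemma exists_balanced_digits {M K : ℤ} (hM : 0 ≤ M) (hK : 0 < K) (hKM : K ≤ 2 * M + 1)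
    (d : ℕ) {r : ℤ} (hr : |r| ≤ M * ∑ i ∈ range d, K ^ i) :
    ∃ a : ℕ → ℤ, (∀ i, |a i| ≤ M) ∧ r = ∑ i ∈ range d, a i * K ^ i := by
  induction d generalizing r with
  | zero => exact ⟨0, fun _ => by simpa using hM, by simpa using hr⟩
  | succ d ih =>
    rw [sum_range_succ, mul_add] at hr
    obtain ⟨c, hc, hrc⟩ := exists_abs_le_abs_sub_mul_le (B := M * ∑ i ∈ range d, K ^ i)
      (r := r) hM (pow_pos hK d)
      (by linarith [pow_le_two_mul_mul_geom_sum_add_one hK.le hKM d]) (by linarith)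
    obtain ⟨a, ha, hsum⟩ := ih hrc
    refine ⟨Function.update a d c, fun i => ?_, ?_⟩
    · rcases eq_or_ne i d with rfl | hid
      · simpa using hc
      · simpa [hid] using ha i
    · rw [sum_range_succ, Function.update_self, sum_congr rfl fun i hi => by
        rw [Function.update_of_ne (mem_range.1 hi).ne], ← hsum]
      ring

lemma exists_list_sum_eq_sum_of_mem {G ι : Type*} [AddCommMonoid G] (S : Set G)
    (s : Finset ι) (f : ι → G) (hf : ∀ i ∈ s, f i ≠ 0 → f i ∈ S) :
    ∃ l : List G, l.length ≤ #s ∧ (∀ x ∈ l, x ∈ S) ∧ l.sum = ∑ i ∈ s, f i := by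
  classical
  refine ⟨(s.filter (f · ≠ 0)).toList.map f, ?_, ?_, ?_⟩
  · simpa using card_filter_le s _
  · simp only [List.mem_map, mem_toList, mem_filter]
    rintro _ ⟨i, ⟨hi, hi0⟩, rfl⟩
    exact hf i hi hi0
  · rw [sum_map_toList, sum_filter_ne_zero]

lemma natCeil_div_two_le_natCeil_half (x : ℝ) : ⌈x⌉₊ / 2 ≤ ⌈x / 2⌉₊ := by
  refine Nat.div_le_of_le_mul (Nat.ceil_le.2 ?_)
  push_cast
  linarith [Nat.le_ceil (x / 2)]

lemma le_cubeRootCeil_pow_three (n : ℕ) : n ≤ cubeRootCeil n ^ 3 := by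
  have hroot : ((n : ℝ) ^ ((1 : ℝ) / 3)) ^ 3 = n := by
    simpa using Real.rpow_inv_natCast_pow (Nat.cast_nonneg n) three_ne_zero
  have : (n : ℝ) ≤ (cubeRootCeil n : ℝ) ^ 3 := by
    rw [← hroot]
    exact pow_le_pow_left₀ (by positivity) (Nat.le_ceil _) 3
  exact_mod_cast this

lemma ncard_cyclicGenSet_le (n : ℕ) : (cyclicGenSet n).ncard ≤ 6 * halfCubeRootCeil n := by
  classical
  set K : ZMod n := (cubeRootCeil n : ZMod n)
  let F := (Icc 1 (halfCubeRootCeil n)).biUnion fun j : ℕ =>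
    ({(j : ZMod n), -(j : ZMod n), j * K, -(j * K), j * K ^ 2, -(j * K ^ 2)} : Finset (ZMod n))
  have hsub : cyclicGenSet n ⊆ F := by
    rintro z ⟨j, hj1, hjM, hz⟩
    simp only [F, coe_biUnion, Set.mem_iUnion, mem_coe, mem_Icc, mem_insert, mem_singleton]
    exact ⟨j, ⟨hj1, hjM⟩, hz⟩
  calc (cyclicGenSet n).ncard ≤ #F := by simpa using Set.ncard_le_ncard hsub F.finite_toSet
    _ ≤ #(Icc 1 (halfCubeRootCeil n)) * 6 := card_biUnion_le_card_mul _ _ _ fun _ _ => card_le_six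
    _ = 6 * halfCubeRootCeil n := by simp [mul_comm]

lemma intCast_mul_pow_mem_cyclicGenSet {n : ℕ} {a : ℤ} (ha0 : a ≠ 0)
    (ha : |a| ≤ halfCubeRootCeil n) {e : ℕ} (he : e < 3) :
    (a : ZMod n) * (cubeRootCeil n : ZMod n) ^ e ∈ cyclicGenSet n := by
  obtain ⟨j, rfl | rfl⟩ := Int.eq_nat_or_neg a <;>
  · simp only [abs_neg, Nat.abs_cast, Nat.cast_le, ne_eq, neg_eq_zero, Nat.cast_eq_zero] at ha ha0
    refine ⟨j, Nat.one_le_iff_ne_zero.2 ha0, ha, ?_⟩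
    interval_cases e <;> simp

lemma exists_list_mem_cyclicGenSet_sum_eq {n : ℕ} [NeZero n] (z : ZMod n) :
    ∃ l : List (ZMod n), l.length ≤ 3 ∧ (∀ x ∈ l, x ∈ cyclicGenSet n) ∧ l.sum = z := by
  have hcube : n ≤ cubeRootCeil n ^ 3 := le_cubeRootCeil_pow_three n
  have hK : 0 < (cubeRootCeil n : ℤ) := by
    refine Int.natCast_pos.2 (Nat.pos_of_ne_zero fun h => NeZero.ne n ?_)
    simpa [h] using hcube
  have hKM : (cubeRootCeil n : ℤ) ≤ 2 * halfCubeRootCeil n + 1 := by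
    unfold halfCubeRootCeil
    omega
  have hz : |z.valMinAbs| ≤ halfCubeRootCeil n * ∑ i ∈ range 3, (cubeRootCeil n : ℤ) ^ i := by
    obtain ⟨hneg, hpos⟩ := z.valMinAbs_mem_Ioc
    have hgeom := pow_le_two_mul_mul_geom_sum_add_one hK.le hKM 3
    have hcube' : (n : ℤ) ≤ cubeRootCeil n ^ 3 := by exact_mod_cast hcube
    exact abs_le.2 ⟨by linarith, by linarith⟩
  obtain ⟨a, ha, hsum⟩ := exists_balanced_digits (Int.natCast_nonneg _) hK hKM 3 hz
  obtain ⟨l, hl, hlS, hl_sum⟩ := exists_list_sum_eq_sum_of_mem (cyclicGenSet n) (range 3)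
    (fun i => (a i : ZMod n) * (cubeRootCeil n : ZMod n) ^ i) fun i hi hi0 =>
      intCast_mul_pow_mem_cyclicGenSet (by rintro h; simp [h] at hi0) (ha i) (mem_range.1 hi)
  refine ⟨l, by simpa using hl, hlS, ?_⟩
  rw [hl_sum, ← z.coe_valMinAbs, hsum]
  simp

/-- For any `n ≥ 6`, the set `S = {±j, ±jK, ±jK² : 1 ≤ j ≤ ⌊K/2⌋} ⊆ ℤ/nℤ`,
where `K = ⌈n^{1/3}⌉`, has cardinality at most `6⌈n^{1/3}/2⌉` and every element
of `ℤ/nℤ` is a sum of at most `3` elements of `S`; hence `Cay(ℤ/nℤ, S)` has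
diameter at most `3`. -/
theorem cyclic_diameter_three (n : ℕ) (hn : 6 ≤ n) :
    (cyclicGenSet n).ncard ≤ 6 * ⌈(n : ℝ) ^ ((1 : ℝ) / 3) / 2⌉₊ ∧
    ∀ z : ZMod n, ∃ l : List (ZMod n),
      l.length ≤ 3 ∧ (∀ x ∈ l, x ∈ cyclicGenSet n) ∧ l.sum = z := by
  have : NeZero n := ⟨by omega⟩
  exact ⟨(ncard_cyclicGenSet_le n).trans
    (Nat.mul_le_mul_left 6 (natCeil_div_two_le_natCeil_half _)),
    exists_list_mem_cyclicGenSet_sum_eq⟩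
end

section
/- There exists N such that for every integer n ≥ N there is a subset T ⊆ (ℤ/nℤ) × (ℤ/nℤ) with |T| ≤ 10·n^{2/3} such that every element of (ℤ/nℤ) × (ℤ/nℤ) can be expressed as a sum of at most 3 elements of T; in particular the Cayley graph Cay((ℤ/nℤ) × (ℤ/nℤ), T) has diameter at most 3. (The paper's Lemma states the cardinality as 9n^{2/3} + o(n^{2/3}), obtained by taking T to be the Cartesian product of two copies of the diameter-3 generating set for ℤ/nℤ.) -/
/-- For all sufficiently large `n` there is a subset `T ⊆ ℤ/nℤ × ℤ/nℤ` of
cardinality at most `10·n^{2/3}` such that every element of `ℤ/nℤ × ℤ/nℤ` is a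
sum of at most `3` elements of `T`; hence `Cay(ℤ/nℤ × ℤ/nℤ, T)` has diameter
at most `3`. -/
theorem product_cyclic_diameter_three :
    ∃ N : ℕ, ∀ n : ℕ, N ≤ n →
      ∃ T : Set (ZMod n × ZMod n),
        (T.ncard : ℝ) ≤ 10 * (n : ℝ) ^ ((2 : ℝ) / 3) ∧
        ∀ z : ZMod n × ZMod n, ∃ l : List (ZMod n × ZMod n),
          l.length ≤ 3 ∧ (∀ x ∈ l, x ∈ T) ∧ l.sum = z := by
  refine ⟨6859, fun n hn => ?_⟩
  have hn0 : 0 < n := by omega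
  have : NeZero n := ⟨hn0.ne'⟩
  set x : ℝ := (n : ℝ) ^ ((1 : ℝ) / 3) with hx
  have hx0 : 0 ≤ x := Real.rpow_nonneg (by positivity) _
  set m : ℕ := ⌈x⌉₊ with hmdef
  have hmx : x ≤ (m : ℝ) := Nat.le_ceil x
  have hmx1 : (m : ℝ) < x + 1 := Nat.ceil_lt_add_one hx0
  have hx3 : x ^ 3 = (n : ℝ) := by
    rw [hx, ← Real.rpow_natCast _ 3, ← Real.rpow_mul (by positivity)]
    norm_num
  have hx19 : (19 : ℝ) ≤ x := by
    have h1 : (6859:ℝ)^((1:ℝ)/3) ≤ x := by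
      rw [hx]
      exact Real.rpow_le_rpow (by norm_num) (by exact_mod_cast hn) (by norm_num)
    have h2 : (6859:ℝ)^((1:ℝ)/3) = 19 := by
      rw [show (6859:ℝ) = 19^(3:ℕ) by norm_num, ← Real.rpow_natCast (19:ℝ) 3,
        ← Real.rpow_mul (by norm_num)]
      norm_num
    linarith
  have hm3 : n ≤ m ^ 3 := by
    have h1 : (n : ℝ) ≤ (m : ℝ) ^ 3 := by
      rw [← hx3]; gcongr
    exact_mod_cast h1
  set S : Finset (ZMod n) :=
    ((Finset.range m).image fun k : ℕ => ((k : ℕ) : ZMod n)) ∪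
    ((Finset.range m).image fun k : ℕ => ((k * m : ℕ) : ZMod n)) ∪
    ((Finset.range m).image fun k : ℕ => ((k * m ^ 2 : ℕ) : ZMod n)) with hS
  refine ⟨↑(S ×ˢ S), ?_, ?_⟩
  · rw [Set.ncard_coe_finset, Finset.card_product]
    have hScard : S.card ≤ 3 * m := by
      calc S.card ≤ _ := Finset.card_union_le _ _
        _ ≤ (((Finset.range m).image fun k : ℕ => ((k : ℕ) : ZMod n)).card
              + ((Finset.range m).image fun k : ℕ => ((k * m : ℕ) : ZMod n)).card)
              + ((Finset.range m).image fun k : ℕ => ((k * m ^ 2 : ℕ) : ZMod n)).card := by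
            gcongr; exact Finset.card_union_le _ _
        _ ≤ m + m + m := by
            gcongr <;> exact (Finset.card_image_le).trans_eq (Finset.card_range m)
        _ = 3 * m := by ring
    have h9 : ((S.card * S.card : ℕ) : ℝ) ≤ 9 * (m : ℝ) ^ 2 := by
      push_cast
      have : (S.card : ℝ) ≤ 3 * (m : ℝ) := by exact_mod_cast hScard
      nlinarith [Nat.cast_nonneg (α := ℝ) S.card]
    refine h9.trans ?_
    have hx2 : x ^ 2 = (n : ℝ) ^ ((2 : ℝ) / 3) := by
      rw [hx, ← Real.rpow_natCast _ 2, ← Real.rpow_mul (by positivity)]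
      norm_num
    rw [← hx2]
    nlinarith [hmx1, hx19]
  · intro z
    obtain ⟨z1, z2⟩ := z
    set v1 := z1.val with hv1
    set v2 := z2.val with hv2
    have hlt1 : v1 < m ^ 3 := lt_of_lt_of_le (ZMod.val_lt z1) hm3
    have hlt2 : v2 < m ^ 3 := lt_of_lt_of_le (ZMod.val_lt z2) hm3
    have key : ∀ v : ℕ, v < m ^ 3 →
        v % m + (v / m % m) * m + (v / m ^ 2) * m ^ 2 = v ∧
        v % m < m ∧ v / m % m < m ∧ v / m ^ 2 < m := by
      intro v hv
      have hm0 : 0 < m := by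
        rcases Nat.eq_zero_or_pos m with h | h
        · simp [h] at hv
        · exact h
      have h1 := Nat.div_add_mod v m
      have h2 := Nat.div_add_mod (v / m) m
      have hdd : v / m / m = v / m ^ 2 := by
        rw [Nat.div_div_eq_div_mul, sq]
      have hlt3 : v / m ^ 2 < m := by
        rw [Nat.div_lt_iff_lt_mul (by positivity),
          show m * m ^ 2 = m ^ 3 from by ring]
        exact hv
      refine ⟨?_, Nat.mod_lt _ hm0, Nat.mod_lt _ hm0, hlt3⟩
      rw [← hdd]
      nlinarith [h1, h2]
    obtain ⟨e1, a1, b1, c1⟩ := key v1 hlt1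
    obtain ⟨e2, a2, b2, c2⟩ := key v2 hlt2
    have mem1 : ∀ k < m, ((k : ℕ) : ZMod n) ∈ S := fun k hk => by
      rw [hS]
      exact Finset.mem_union_left _ (Finset.mem_union_left _
        (Finset.mem_image.2 ⟨k, Finset.mem_range.2 hk, rfl⟩))
    have mem2 : ∀ k < m, ((k * m : ℕ) : ZMod n) ∈ S := fun k hk => by
      rw [hS]
      exact Finset.mem_union_left _ (Finset.mem_union_right _
        (Finset.mem_image.2 ⟨k, Finset.mem_range.2 hk, rfl⟩))
    have mem3 : ∀ k < m, ((k * m ^ 2 : ℕ) : ZMod n) ∈ S := fun k hk => by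
      rw [hS]
      exact Finset.mem_union_right _
        (Finset.mem_image.2 ⟨k, Finset.mem_range.2 hk, rfl⟩)
    refine ⟨[(((v1 % m : ℕ) : ZMod n), ((v2 % m : ℕ) : ZMod n)),
             (((v1 / m % m * m : ℕ) : ZMod n), ((v2 / m % m * m : ℕ) : ZMod n)),
             (((v1 / m ^ 2 * m ^ 2 : ℕ) : ZMod n), ((v2 / m ^ 2 * m ^ 2 : ℕ) : ZMod n))],
           by norm_num, ?_, ?_⟩
    · intro p hp
      simp only [List.mem_cons, List.not_mem_nil, or_false] at hp
      rcases hp with h | h | h <;> subst h <;>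
        simp only [Finset.coe_product, Set.mem_prod, Finset.mem_coe]
      · exact ⟨mem1 _ a1, mem1 _ a2⟩
      · exact ⟨mem2 _ b1, mem2 _ b2⟩
      · exact ⟨mem3 _ c1, mem3 _ c2⟩
    · have hsum1 : (((v1 % m : ℕ) : ZMod n)) + ((v1 / m % m * m : ℕ) : ZMod n)
          + ((v1 / m ^ 2 * m ^ 2 : ℕ) : ZMod n) = z1 := by
        rw [← Nat.cast_add, ← Nat.cast_add, e1]
        exact (ZMod.natCast_rightInverse z1)
      have hsum2 : (((v2 % m : ℕ) : ZMod n)) + ((v2 / m % m * m : ℕ) : ZMod n)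
          + ((v2 / m ^ 2 * m ^ 2 : ℕ) : ZMod n) = z2 := by
        rw [← Nat.cast_add, ← Nat.cast_add, e2]
        exact (ZMod.natCast_rightInverse z2)
      simp only [List.sum_cons, List.sum_nil, add_zero, Prod.mk_add_mk]
      rw [Prod.ext_iff]
      constructor
      · simpa [add_assoc] using hsum1
      · simpa [add_assoc] using hsum2
end

section
/- Let p be an odd prime, let H be the group (under matrix multiplication) of 3×3 upper unitriangular matrices over ℤ/pℤ (matrices U(a,b,c) with diagonal entries 1, entries a,b,c in positions (1,2),(1,3),(2,3) respectively, and 0 below the diagonal), and let G = H × ℤ/2ℤ. For x ∈ ℤ/pℤ with x ≠ 0 define α_x = (U(x,x,0), 0) and β_x = (U(0,x,x), 1), and let S₁ = {α_x : x ≠ 0} ∪ {β_x : x ≠ 0}. Then every element of G of the form (U(a,b,c), 0) with a ≠ 0 can be expressed as a product of exactly 3 elements of S₁. -/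
/-- The upper unitriangular matrix `U(a,b,c) = [[1,a,b],[0,1,c],[0,0,1]]` over
`ℤ/pℤ`.  These matrices form the upper unitriangular subgroup `H` of
`SL(3,p)` under matrix multiplication. -/
def uniTri (p : ℕ) (a b c : ZMod p) : Matrix (Fin 3) (Fin 3) (ZMod p) :=
  !![1, a, b; 0, 1, c; 0, 0, 1]

/-- The ambient monoid containing `G = H × ℤ/2ℤ` (matrix multiplication in the
first component, addition in `ℤ/2ℤ`, written multiplicatively, in the
second). -/
abbrev UniTriZ2 (p : ℕ) : Type :=
  Matrix (Fin 3) (Fin 3) (ZMod p) × Multiplicative (ZMod 2)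

/-- `α_x = (U(x,x,0), 0)` for `x ≠ 0`. -/
def alphaGen (p : ℕ) (x : ZMod p) : UniTriZ2 p :=
  (uniTri p x x 0, Multiplicative.ofAdd 0)

/-- `β_x = (U(0,x,x), 1)` for `x ≠ 0`. -/
def betaGen (p : ℕ) (x : ZMod p) : UniTriZ2 p :=
  (uniTri p 0 x x, Multiplicative.ofAdd 1)

/-- The set `S₁ = {α_x : x ≠ 0} ∪ {β_x : x ≠ 0}`. -/
def matGenSet (p : ℕ) : Set (UniTriZ2 p) :=
  {g | ∃ x : ZMod p, x ≠ 0 ∧ (g = alphaGen p x ∨ g = betaGen p x)}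

lemma uniTri_mul (p : ℕ) (a b c a' b' c' : ZMod p) :
    uniTri p a b c * uniTri p a' b' c' =
      uniTri p (a + a') (b + b' + a * c') (c + c') := by
  ext i j
  fin_cases i <;> fin_cases j <;>
    simp [uniTri, Matrix.mul_apply, Fin.sum_univ_three, Matrix.vecHead,
      Matrix.vecTail] <;> ring

/-- For an odd prime `p`, every element of `G = H × ℤ/2ℤ` of the form
`(U(a,b,c), 0)` with `a ≠ 0` is a product of exactly `3` elements of `S₁`. -/
theorem matrix_cover_first_component (p : ℕ) (hp : p.Prime) (hodd : Odd p)
    (a b c : ZMod p) (ha : a ≠ 0) :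
    ∃ l : List (UniTriZ2 p), l.length = 3 ∧ (∀ v ∈ l, v ∈ matGenSet p) ∧
      l.prod = (uniTri p a b c, Multiplicative.ofAdd 0) := by
  haveI : Fact p.Prime := ⟨hp⟩
  have h2 : (2 : ZMod p) ≠ 0 := by
    intro h
    have h2' : ((2 : ℕ) : ZMod p) = 0 := by exact_mod_cast h
    have := (ZMod.natCast_eq_zero_iff 2 p).mp h2'
    have hp2 : p = 2 := (Nat.prime_dvd_prime_iff_eq hp Nat.prime_two).mp this
    rw [hp2] at hodd
    exact (Nat.not_odd_iff_even.mpr (by decide)) hodd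
  have hone : (1 : ZMod p) ≠ 0 := one_ne_zero
  -- choose z₀ ≠ 0 with z₀ ≠ c, and y₀ = c - z₀ ≠ 0
  obtain ⟨z₀, hz₀, hz₀c⟩ : ∃ z₀ : ZMod p, z₀ ≠ 0 ∧ z₀ ≠ c := by
    by_cases hc : c = 1
    · exact ⟨-1, neg_ne_zero.mpr hone, by
        rw [hc]; intro h
        apply h2; have : (1 : ZMod p) + 1 = 0 := by linear_combination -h
        linear_combination this⟩
    · exact ⟨1, hone, fun h => hc h.symm⟩
  have hy₀ : c - z₀ ≠ 0 := sub_ne_zero.mpr (Ne.symm hz₀c)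
  set d : ZMod p := b - a - c with hd
  by_cases hd0 : d = 0
  · -- b = a + c : use β_{c-z₀} β_{z₀} α_a
    refine ⟨[betaGen p (c - z₀), betaGen p z₀, alphaGen p a], rfl, ?_, ?_⟩
    · rintro v hv
      simp only [List.mem_cons, List.not_mem_nil, or_false] at hv
      rcases hv with rfl | rfl | rfl
      · exact ⟨c - z₀, hy₀, Or.inr rfl⟩
      · exact ⟨z₀, hz₀, Or.inr rfl⟩
      · exact ⟨a, ha, Or.inl rfl⟩
    · have hb : b = a + c := by linear_combination hd0 - hd
      simp only [List.prod_cons, List.prod_nil, mul_one, betaGen, alphaGen,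
        Prod.mk_mul_mk, uniTri_mul]
      refine Prod.ext ?_ (by rfl)
      simp only
      rw [hb]; congr 1 <;> ring
  · by_cases hdac : d = a * c
    · -- b = a + c + a c : use α_a β_{c-z₀} β_{z₀}
      refine ⟨[alphaGen p a, betaGen p (c - z₀), betaGen p z₀], rfl, ?_, ?_⟩
      · rintro v hv
        simp only [List.mem_cons, List.not_mem_nil, or_false] at hv
        rcases hv with rfl | rfl | rfl
        · exact ⟨a, ha, Or.inl rfl⟩
        · exact ⟨c - z₀, hy₀, Or.inr rfl⟩
        · exact ⟨z₀, hz₀, Or.inr rfl⟩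
      · have hb : b = a + c + a * c := by linear_combination hdac - hd
        simp only [List.prod_cons, List.prod_nil, mul_one, betaGen, alphaGen,
          Prod.mk_mul_mk, uniTri_mul]
        refine Prod.ext ?_ (by rfl)
        simp only
        rw [hb]; congr 1 <;> ring
    · -- general case : use β_{c-z} α_a β_z with z = d / a
      set z : ZMod p := d * a⁻¹ with hz
      have haz : a * z = d := by
        rw [hz]; field_simp
      have hzne : z ≠ 0 := by
        intro h
        apply hd0
        rw [← haz, h, mul_zero]
      have hzc : z ≠ c := by
        intro h
        apply hdac
        rw [← haz, h]
      have hyne : c - z ≠ 0 := sub_ne_zero.mpr (Ne.symm hzc)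
      refine ⟨[betaGen p (c - z), alphaGen p a, betaGen p z], rfl, ?_, ?_⟩
      · rintro v hv
        simp only [List.mem_cons, List.not_mem_nil, or_false] at hv
        rcases hv with rfl | rfl | rfl
        · exact ⟨c - z, hyne, Or.inr rfl⟩
        · exact ⟨a, ha, Or.inl rfl⟩
        · exact ⟨z, hzne, Or.inr rfl⟩
      · have hb : b = a + c + a * z := by
          rw [haz]; linear_combination -hd
        simp only [List.prod_cons, List.prod_nil, mul_one, betaGen, alphaGen,
          Prod.mk_mul_mk, uniTri_mul]
        refine Prod.ext ?_ (by rfl)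
        simp only
        rw [hb]; congr 1 <;> ring
end

section
/- There exists a constant C > 0 such that for every odd prime p the following holds. Let H be the group of 3×3 upper unitriangular matrices over ℤ/pℤ and let G = H × ℤ/2ℤ (a group of order 2p³). Then there exists an inverse-closed subset S ⊆ G with |S| ≤ 2p + C·p^{2/3}, such that S contains neither the identity of G nor the unique central involution (I, 1), and every element of G can be expressed as a product of at most 3 elements of S; in particular the Cayley graph Cay(G,S) is undirected and has diameter at most 3. -/
namespace MD3

/-! ### Basic algebra of `uniTri` pairs -/

lemma uniTri_mul (p : ℕ) (a b c a' b' c' : ZMod p) :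
    uniTri p a b c * uniTri p a' b' c' = uniTri p (a+a') (b+b'+a*c') (c+c') := by
  unfold uniTri
  ext i j
  fin_cases i <;> fin_cases j <;>
    simp [Matrix.mul_apply, Fin.sum_univ_three, Matrix.vecHead, Matrix.vecTail] <;> ring

lemma uniTri_inj (p : ℕ) {a b c a' b' c' : ZMod p}
    (h : uniTri p a b c = uniTri p a' b' c') : a = a' ∧ b = b' ∧ c = c' := by
  refine ⟨?_, ?_, ?_⟩
  · simpa [uniTri] using congrFun (congrFun h 0) 1
  · simpa [uniTri] using congrFun (congrFun h 0) 2
  · simpa [uniTri] using congrFun (congrFun h 1) 2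

/-- Generator pair notation. -/
def gp (p : ℕ) (a b c : ZMod p) (j : ZMod 2) : UniTriZ2 p :=
  (uniTri p a b c, Multiplicative.ofAdd j)

lemma gp_mul (p : ℕ) (a b c a' b' c' : ZMod p) (j j' : ZMod 2) :
    gp p a b c j * gp p a' b' c' j' = gp p (a+a') (b+b'+a*c') (c+c') (j+j') := by
  unfold gp
  simp [Prod.ext_iff, uniTri_mul]

lemma gp_one (p : ℕ) : gp p 0 0 0 0 = 1 := by
  unfold gp uniTri
  refine Prod.ext ?_ rfl
  ext i j
  fin_cases i <;> fin_cases j <;> simp [Matrix.one_apply, Matrix.vecHead, Matrix.vecTail]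

lemma gp_congr (p : ℕ) {a b c a' b' c' : ZMod p} {j j' : ZMod 2}
    (h1 : a = a') (h2 : b = b') (h3 : c = c') (h4 : j = j') :
    gp p a b c j = gp p a' b' c' j' := by subst h1 h2 h3 h4; rfl

lemma gp_inj (p : ℕ) {a b c a' b' c' : ZMod p} {j j' : ZMod 2}
    (h : gp p a b c j = gp p a' b' c' j') : a = a' ∧ b = b' ∧ c = c' ∧ j = j' := by
  obtain ⟨h1, h2⟩ := Prod.mk.injEq .. ▸ h
  obtain ⟨e1, e2, e3⟩ := uniTri_inj p h1
  exact ⟨e1, e2, e3, by simpa using h2⟩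

lemma jcases (j : ZMod 2) : j = 0 ∨ j = 1 := by revert j; decide

lemma jj_zero (j : ZMod 2) : j + j = 0 := by revert j; decide

/-! ### The square-root decomposition set -/

def rr (p : ℕ) : ℕ := p.sqrt + 1

def Tn (p : ℕ) : Finset ℕ :=
  Finset.Icc 1 (2 * rr p) ∪ (Finset.Icc 1 (rr p)).image (fun j => rr p * j)

def Wset (p : ℕ) : Finset (ZMod p) :=
  (Tn p).image (fun n : ℕ => (n : ZMod p)) ∪ (Tn p).image (fun n : ℕ => -(n : ZMod p))

lemma two_rr_lt (p : ℕ) (hp : 7 ≤ p) : 2 * rr p < p := by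
  unfold rr
  rcases le_or_gt p.sqrt 2 with h | h
  · omega
  · have h2 := Nat.sqrt_le p
    nlinarith

lemma rr_pos (p : ℕ) : 0 < rr p := Nat.succ_pos _

lemma rr_lt (p : ℕ) (hp : 7 ≤ p) : rr p < p := by
  have := two_rr_lt p hp; have := rr_pos p; omega

lemma lt_rr_sq (p : ℕ) : p < rr p * rr p := Nat.lt_succ_sqrt p

lemma mem_Tn_Icc (p : ℕ) {m : ℕ} (h1 : 1 ≤ m) (h2 : m ≤ 2 * rr p) : m ∈ Tn p :=
  Finset.mem_union_left _ (Finset.mem_Icc.2 ⟨h1, h2⟩)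

lemma mem_Tn_mul (p : ℕ) {j : ℕ} (h1 : 1 ≤ j) (h2 : j ≤ rr p) : rr p * j ∈ Tn p :=
  Finset.mem_union_right _ (Finset.mem_image.2 ⟨j, Finset.mem_Icc.2 ⟨h1, h2⟩, rfl⟩)

lemma mem_Wset_of_Tn (p : ℕ) {n : ℕ} (hn : n ∈ Tn p) : ((n : ZMod p)) ∈ Wset p :=
  Finset.mem_union_left _ (Finset.mem_image.2 ⟨n, hn, rfl⟩)

lemma Tn_cast_ne_zero (p : ℕ) (hp : p.Prime) (hp7 : 7 ≤ p) {n : ℕ} (hn : n ∈ Tn p) :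
    (n : ZMod p) ≠ 0 := by
  haveI : NeZero p := ⟨hp.pos.ne'⟩
  rw [Ne, ZMod.natCast_eq_zero_iff]
  simp only [Tn, Finset.mem_union, Finset.mem_Icc, Finset.mem_image] at hn
  rcases hn with ⟨h1, h2⟩ | ⟨j, ⟨hj1, hj2⟩, rfl⟩
  · intro hdvd
    have := Nat.le_of_dvd (by omega) hdvd
    have := two_rr_lt p hp7
    omega
  · intro hdvd
    rcases (Nat.Prime.dvd_mul hp).1 hdvd with h | h
    · have := Nat.le_of_dvd (rr_pos p) h
      have := rr_lt p hp7
      omega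
    · have := Nat.le_of_dvd (by omega) h
      have := rr_lt p hp7
      omega

lemma Wset_ne_zero (p : ℕ) (hp : p.Prime) (hp7 : 7 ≤ p) {w : ZMod p} (hw : w ∈ Wset p) :
    w ≠ 0 := by
  simp only [Wset, Finset.mem_union, Finset.mem_image] at hw
  rcases hw with ⟨n, hn, rfl⟩ | ⟨n, hn, rfl⟩
  · exact Tn_cast_ne_zero p hp hp7 hn
  · simpa using Tn_cast_ne_zero p hp hp7 hn

lemma Wset_neg (p : ℕ) {w : ZMod p} (hw : w ∈ Wset p) : -w ∈ Wset p := by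
  simp only [Wset, Finset.mem_union, Finset.mem_image] at hw ⊢
  rcases hw with ⟨n, hn, rfl⟩ | ⟨n, hn, rfl⟩
  · exact Or.inr ⟨n, hn, rfl⟩
  · exact Or.inl ⟨n, hn, by simp⟩

lemma one_mem_Wset (p : ℕ) : (1 : ZMod p) ∈ Wset p := by
  have h := mem_Wset_of_Tn p (mem_Tn_Icc p (le_refl 1) (by have := rr_pos p; omega))
  simpa using h

lemma rep (p : ℕ) (hp : p.Prime) (u : ZMod p) (hu : u ≠ 0) :
    ∃ t s : ZMod p, t ∈ Wset p ∧ s ∈ Wset p ∧ t + s = u := by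
  haveI : NeZero p := ⟨hp.pos.ne'⟩
  have hr0 : 0 < rr p := rr_pos p
  set r := rr p with hr
  set n := u.val with hnval
  have hn1 : 1 ≤ n := by
    rcases Nat.eq_zero_or_pos n with h | h
    · exact absurd ((ZMod.val_eq_zero u).1 h) hu
    · exact h
  have hnp : n < p := ZMod.val_lt u
  have hun : ((n : ℕ) : ZMod p) = u := by simp [hnval, ZMod.natCast_val, ZMod.cast_id]
  have hq : n / r < r := by
    rw [Nat.div_lt_iff_lt_mul hr0]
    exact lt_trans hnp (lt_rr_sq p)
  have hi : n % r < r := Nat.mod_lt _ hr0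
  have hdm : r * (n / r) + n % r = n := Nat.div_add_mod n r
  have memNegR : (-(((r : ℕ)) : ZMod p)) ∈ Wset p :=
    Wset_neg p (mem_Wset_of_Tn p (mem_Tn_Icc p (by omega) (by omega)))
  rcases Nat.eq_zero_or_pos (n / r) with hq0 | hq1
  · rw [hq0, Nat.mul_zero, Nat.zero_add] at hdm
    have hnr : n < r := by omega
    refine ⟨((n + r : ℕ) : ZMod p), -((r : ℕ) : ZMod p),
      mem_Wset_of_Tn p (mem_Tn_Icc p (by omega) (by omega)), memNegR, ?_⟩
    rw [← hun]; push_cast; ring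
  · rcases Nat.eq_zero_or_pos (n % r) with hi0 | hi1
    · rw [hi0, Nat.add_zero] at hdm
      have hmul : r * (n / r + 1) = n + r := by rw [Nat.mul_succ, hdm]
      refine ⟨((r * (n / r + 1) : ℕ) : ZMod p), -((r : ℕ) : ZMod p),
        mem_Wset_of_Tn p (mem_Tn_mul p (by omega) (by omega)), memNegR, ?_⟩
      rw [hmul, ← hun]; push_cast; ring
    · refine ⟨((r * (n / r) : ℕ) : ZMod p), ((n % r : ℕ) : ZMod p),
        mem_Wset_of_Tn p (mem_Tn_mul p (by omega) (by omega)),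
        mem_Wset_of_Tn p (mem_Tn_Icc p (by omega) (by omega)), ?_⟩
      rw [← hun]
      conv_rhs => rw [← hdm]
      push_cast; ring

lemma Wset_card (p : ℕ) : (Wset p).card ≤ 6 * rr p := by
  have h1 : (Tn p).card ≤ 3 * rr p := by
    unfold Tn
    refine le_trans (Finset.card_union_le _ _) ?_
    have a1 : (Finset.Icc 1 (2 * rr p)).card ≤ 2 * rr p := by simp [Nat.card_Icc]
    have a2 : ((Finset.Icc 1 (rr p)).image (fun j => rr p * j)).card ≤ rr p :=
      le_trans Finset.card_image_le (by simp [Nat.card_Icc])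
    omega
  unfold Wset
  refine le_trans (Finset.card_union_le _ _) ?_
  have b1 : ((Tn p).image (fun n : ℕ => (n : ZMod p))).card ≤ (Tn p).card := Finset.card_image_le
  have b2 : ((Tn p).image (fun n : ℕ => -(n : ZMod p))).card ≤ (Tn p).card := Finset.card_image_le
  omega

/-! ### The generating set -/

noncomputable def bigS (p : ℕ) : Finset (UniTriZ2 p) :=
  ((Finset.range p).erase 0).image (fun n : ℕ => gp p (n : ZMod p) (n : ZMod p) 0 0) ∪
  ((Finset.range p).erase 0).image (fun n : ℕ => gp p 0 (n : ZMod p) (n : ZMod p) 1) ∪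
  (Wset p).image (fun t => gp p 0 t 0 0) ∪
  (Wset p).image (fun t => gp p 0 t 0 1)

lemma range_cast_ne_zero (p : ℕ) (hp : p.Prime) {n : ℕ} (hn : n ∈ (Finset.range p).erase 0) :
    (n : ZMod p) ≠ 0 := by
  haveI : NeZero p := ⟨hp.pos.ne'⟩
  obtain ⟨hn0, hnp⟩ := Finset.mem_erase.1 hn
  rw [Finset.mem_range] at hnp
  rw [Ne, ZMod.natCast_eq_zero_iff]
  intro hdvd
  have := Nat.le_of_dvd (by omega) hdvd
  omega

lemma alpha_mem (p : ℕ) [NeZero p] {x : ZMod p} (hx : x ≠ 0) : gp p x x 0 0 ∈ bigS p := by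
  refine Finset.mem_union_left _ (Finset.mem_union_left _ (Finset.mem_union_left _ ?_))
  have hv : x.val ≠ 0 := fun h => hx ((ZMod.val_eq_zero x).mp h)
  refine Finset.mem_image.2 ⟨x.val, Finset.mem_erase.2 ⟨hv, Finset.mem_range.2 (ZMod.val_lt x)⟩, ?_⟩
  simp [ZMod.natCast_val, ZMod.cast_id]

lemma beta_mem (p : ℕ) [NeZero p] {x : ZMod p} (hx : x ≠ 0) : gp p 0 x x 1 ∈ bigS p := by
  refine Finset.mem_union_left _ (Finset.mem_union_left _ (Finset.mem_union_right _ ?_))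
  have hv : x.val ≠ 0 := fun h => hx ((ZMod.val_eq_zero x).mp h)
  refine Finset.mem_image.2 ⟨x.val, Finset.mem_erase.2 ⟨hv, Finset.mem_range.2 (ZMod.val_lt x)⟩, ?_⟩
  simp [ZMod.natCast_val, ZMod.cast_id]

lemma e_mem (p : ℕ) {t : ZMod p} (ht : t ∈ Wset p) (j : ZMod 2) : gp p 0 t 0 j ∈ bigS p := by
  rcases jcases j with h | h <;> subst h
  · exact Finset.mem_union_left _ (Finset.mem_union_right _ (Finset.mem_image.2 ⟨t, ht, rfl⟩))
  · exact Finset.mem_union_right _ (Finset.mem_image.2 ⟨t, ht, rfl⟩)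

lemma bigS_shape (p : ℕ) {g : UniTriZ2 p} (hg : g ∈ bigS p) :
    ∃ a b c : ZMod p, ∃ j : ZMod 2, g = gp p a b c j := by
  simp only [bigS, Finset.mem_union, Finset.mem_image] at hg
  rcases hg with ((⟨n, _, rfl⟩ | ⟨n, _, rfl⟩) | ⟨t, _, rfl⟩) | ⟨t, _, rfl⟩
  exacts [⟨_, _, _, _, rfl⟩, ⟨_, _, _, _, rfl⟩, ⟨_, _, _, _, rfl⟩, ⟨_, _, _, _, rfl⟩]

lemma one_not_mem (p : ℕ) (hp : p.Prime) (hp7 : 7 ≤ p) : gp p 0 0 0 0 ∉ bigS p := by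
  intro hg
  simp only [bigS, Finset.mem_union, Finset.mem_image] at hg
  rcases hg with ((⟨n, hn, heq⟩ | ⟨n, hn, heq⟩) | ⟨t, ht, heq⟩) | ⟨t, ht, heq⟩
  · exact range_cast_ne_zero p hp hn (gp_inj p heq).1
  · exact absurd (gp_inj p heq).2.2.2 (by decide)
  · exact Wset_ne_zero p hp hp7 ht (gp_inj p heq).2.1
  · exact absurd (gp_inj p heq).2.2.2 (by decide)

lemma iota_not_mem (p : ℕ) (hp : p.Prime) (hp7 : 7 ≤ p) : gp p 0 0 0 1 ∉ bigS p := by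
  intro hg
  simp only [bigS, Finset.mem_union, Finset.mem_image] at hg
  rcases hg with ((⟨n, hn, heq⟩ | ⟨n, hn, heq⟩) | ⟨t, ht, heq⟩) | ⟨t, ht, heq⟩
  · exact absurd (gp_inj p heq).2.2.2 (by decide)
  · exact range_cast_ne_zero p hp hn (gp_inj p heq).2.1
  · exact absurd (gp_inj p heq).2.2.2 (by decide)
  · exact Wset_ne_zero p hp hp7 ht (gp_inj p heq).2.1

lemma inv_closed (p : ℕ) (hp : p.Prime) :
    ∀ g ∈ bigS p, ∃ h ∈ bigS p, g * h = 1 ∧ h * g = 1 := by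
  haveI : NeZero p := ⟨hp.pos.ne'⟩
  intro g hg
  simp only [bigS, Finset.mem_union, Finset.mem_image] at hg
  rcases hg with ((⟨n, hn, rfl⟩ | ⟨n, hn, rfl⟩) | ⟨t, ht, rfl⟩) | ⟨t, ht, rfl⟩
  · have hx : (n : ZMod p) ≠ 0 := range_cast_ne_zero p hp hn
    refine ⟨gp p (-(n:ZMod p)) (-(n:ZMod p)) 0 0, alpha_mem p (neg_ne_zero.2 hx), ?_, ?_⟩ <;>
      rw [gp_mul, ← gp_one p] <;> exact gp_congr p (by ring) (by ring) (by ring) (by decide)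
  · have hx : (n : ZMod p) ≠ 0 := range_cast_ne_zero p hp hn
    refine ⟨gp p 0 (-(n:ZMod p)) (-(n:ZMod p)) 1, beta_mem p (neg_ne_zero.2 hx), ?_, ?_⟩ <;>
      rw [gp_mul, ← gp_one p] <;> exact gp_congr p (by ring) (by ring) (by ring) (by decide)
  · refine ⟨gp p 0 (-t) 0 0, e_mem p (Wset_neg p ht) 0, ?_, ?_⟩ <;>
      rw [gp_mul, ← gp_one p] <;> exact gp_congr p (by ring) (by ring) (by ring) (by decide)
  · refine ⟨gp p 0 (-t) 0 1, e_mem p (Wset_neg p ht) 1, ?_, ?_⟩ <;>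
      rw [gp_mul, ← gp_one p] <;> exact gp_congr p (by ring) (by ring) (by ring) (by decide)

lemma bigS_card (p : ℕ) : (bigS p).card ≤ 2 * p + 12 * rr p := by
  have he : ((Finset.range p).erase 0).card ≤ p := by
    refine le_trans (Finset.card_erase_le) (by simp)
  have h1 : (((Finset.range p).erase 0).image
      (fun n : ℕ => gp p (n : ZMod p) (n : ZMod p) 0 0)).card ≤ p :=
    le_trans Finset.card_image_le he
  have h2 : (((Finset.range p).erase 0).image
      (fun n : ℕ => gp p 0 (n : ZMod p) (n : ZMod p) 1)).card ≤ p :=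
    le_trans Finset.card_image_le he
  have h3 : ((Wset p).image (fun t => gp p 0 t 0 0)).card ≤ 6 * rr p :=
    le_trans Finset.card_image_le (Wset_card p)
  have h4 : ((Wset p).image (fun t => gp p 0 t 0 1)).card ≤ 6 * rr p :=
    le_trans Finset.card_image_le (Wset_card p)
  unfold bigS
  refine le_trans (Finset.card_union_le _ _) ?_
  have := Finset.card_union_le
    (((Finset.range p).erase 0).image (fun n : ℕ => gp p (n : ZMod p) (n : ZMod p) 0 0) ∪
     ((Finset.range p).erase 0).image (fun n : ℕ => gp p 0 (n : ZMod p) (n : ZMod p) 1))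
    ((Wset p).image (fun t => gp p 0 t 0 0))
  have := Finset.card_union_le
    (((Finset.range p).erase 0).image (fun n : ℕ => gp p (n : ZMod p) (n : ZMod p) 0 0))
    (((Finset.range p).erase 0).image (fun n : ℕ => gp p 0 (n : ZMod p) (n : ZMod p) 1))
  omega


lemma listmem1 {α : Type*} [Monoid α] {S : Finset α} {g1 : α} (h1 : g1 ∈ S) :
    ∀ v ∈ [g1], v ∈ S := by
  intro v hv; simp only [List.mem_singleton] at hv; subst hv; exact h1

lemma listmem2 {α : Type*} [Monoid α] {S : Finset α} {g1 g2 : α} (h1 : g1 ∈ S) (h2 : g2 ∈ S) :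
    ∀ v ∈ [g1, g2], v ∈ S := by
  intro v hv
  simp only [List.mem_cons, List.not_mem_nil, or_false] at hv
  rcases hv with rfl | rfl
  exacts [h1, h2]

lemma listmem3 {α : Type*} [Monoid α] {S : Finset α} {g1 g2 g3 : α}
    (h1 : g1 ∈ S) (h2 : g2 ∈ S) (h3 : g3 ∈ S) :
    ∀ v ∈ [g1, g2, g3], v ∈ S := by
  intro v hv
  simp only [List.mem_cons, List.not_mem_nil, or_false] at hv
  rcases hv with rfl | rfl | rfl
  exacts [h1, h2, h3]

lemma gen (p : ℕ) (hp : p.Prime) (hodd : Odd p) (hp7 : 7 ≤ p) (a b c : ZMod p) (j : ZMod 2) :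
    ∃ l : List (UniTriZ2 p), l.length ≤ 3 ∧ (∀ v ∈ l, v ∈ bigS p) ∧ l.prod = gp p a b c j := by
  haveI : Fact p.Prime := ⟨hp⟩
  haveI : NeZero p := ⟨hp.pos.ne'⟩
  have h2 : (2 : ZMod p) ≠ 0 := by
    rw [Ne, show ((2 : ZMod p)) = ((2 : ℕ) : ZMod p) by push_cast; ring,
      ZMod.natCast_eq_zero_iff]
    intro hdvd
    have := Nat.le_of_dvd (by omega) hdvd
    interval_cases p <;> omega
  have h1 : (1 : ZMod p) ≠ 0 := one_ne_zero
  by_cases ha : a = 0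
  · by_cases hc : c = 0
    · -- a = 0, c = 0
      subst ha hc
      by_cases hb : b = 0
      · subst hb
        rcases jcases j with rfl | rfl
        · exact ⟨[], by norm_num, by simp, by rw [List.prod_nil, gp_one p]⟩
        · -- the involution : βββ with 1 + 1 + (-2) = 0
          refine ⟨[gp p 0 1 1 1, gp p 0 1 1 1, gp p 0 (-2) (-2) 1], by norm_num,
            listmem3 (beta_mem p h1) (beta_mem p h1) (beta_mem p (neg_ne_zero.2 h2)), ?_⟩
          simp only [List.prod_cons, List.prod_nil, mul_one, gp_mul]
          exact gp_congr p (by ring) (by ring) (by ring) (by decide)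
      · obtain ⟨t, s, ht, hs, hts⟩ := rep p hp b hb
        rcases jcases j with rfl | rfl
        · refine ⟨[gp p 0 t 0 0, gp p 0 s 0 0], by norm_num,
            listmem2 (e_mem p ht 0) (e_mem p hs 0), ?_⟩
          simp only [List.prod_cons, List.prod_nil, mul_one, gp_mul]
          exact gp_congr p (by ring) (by linear_combination hts) (by ring) (by decide)
        · refine ⟨[gp p 0 t 0 1, gp p 0 s 0 0], by norm_num,
            listmem2 (e_mem p ht 1) (e_mem p hs 0), ?_⟩
          simp only [List.prod_cons, List.prod_nil, mul_one, gp_mul]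
          exact gp_congr p (by ring) (by linear_combination hts) (by ring) (by decide)
    · -- a = 0, c ≠ 0
      subst ha
      by_cases hu : b - c = 0
      · have hbc : b = c := by linear_combination hu
        subst hbc
        rcases jcases j with rfl | rfl
        · refine ⟨[gp p 0 b b 1, gp p 0 1 0 1, gp p 0 (-1) 0 0], by norm_num,
            listmem3 (beta_mem p hc) (e_mem p (one_mem_Wset p) 1)
              (e_mem p (Wset_neg p (one_mem_Wset p)) 0), ?_⟩
          simp only [List.prod_cons, List.prod_nil, mul_one, gp_mul]
          exact gp_congr p (by ring) (by ring) (by ring) (by decide)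
        · exact ⟨[gp p 0 b b 1], by norm_num, listmem1 (beta_mem p hc), by
            simp only [List.prod_cons, List.prod_nil, mul_one]⟩
      · obtain ⟨t, s, ht, hs, hts⟩ := rep p hp (b - c) hu
        rcases jcases j with rfl | rfl
        · refine ⟨[gp p 0 c c 1, gp p 0 t 0 1, gp p 0 s 0 0], by norm_num,
            listmem3 (beta_mem p hc) (e_mem p ht 1) (e_mem p hs 0), ?_⟩
          simp only [List.prod_cons, List.prod_nil, mul_one, gp_mul]
          exact gp_congr p (by ring) (by linear_combination hts) (by ring) (by decide)
        · refine ⟨[gp p 0 c c 1, gp p 0 t 0 0, gp p 0 s 0 0], by norm_num,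
            listmem3 (beta_mem p hc) (e_mem p ht 0) (e_mem p hs 0), ?_⟩
          simp only [List.prod_cons, List.prod_nil, mul_one, gp_mul]
          exact gp_congr p (by ring) (by linear_combination hts) (by ring) (by decide)
  · by_cases hc : c = 0
    · -- a ≠ 0, c = 0
      subst hc
      by_cases hu : b - a = 0
      · have hba : b = a := by linear_combination hu
        subst hba
        rcases jcases j with rfl | rfl
        · exact ⟨[gp p b b 0 0], by norm_num, listmem1 (alpha_mem p ha), by
            simp only [List.prod_cons, List.prod_nil, mul_one]⟩
        · refine ⟨[gp p b b 0 0, gp p 0 1 0 1, gp p 0 (-1) 0 0], by norm_num,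
            listmem3 (alpha_mem p ha) (e_mem p (one_mem_Wset p) 1)
              (e_mem p (Wset_neg p (one_mem_Wset p)) 0), ?_⟩
          simp only [List.prod_cons, List.prod_nil, mul_one, gp_mul]
          exact gp_congr p (by ring) (by ring) (by ring) (by decide)
      · obtain ⟨t, s, ht, hs, hts⟩ := rep p hp (b - a) hu
        rcases jcases j with rfl | rfl
        · refine ⟨[gp p a a 0 0, gp p 0 t 0 0, gp p 0 s 0 0], by norm_num,
            listmem3 (alpha_mem p ha) (e_mem p ht 0) (e_mem p hs 0), ?_⟩
          simp only [List.prod_cons, List.prod_nil, mul_one, gp_mul]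
          exact gp_congr p (by ring) (by linear_combination hts) (by ring) (by decide)
        · refine ⟨[gp p a a 0 0, gp p 0 t 0 1, gp p 0 s 0 0], by norm_num,
            listmem3 (alpha_mem p ha) (e_mem p ht 1) (e_mem p hs 0), ?_⟩
          simp only [List.prod_cons, List.prod_nil, mul_one, gp_mul]
          exact gp_congr p (by ring) (by linear_combination hts) (by ring) (by decide)
    · -- a ≠ 0, c ≠ 0
      have hhalf : c / 2 ≠ 0 := div_ne_zero hc h2
      have hhsum : c / 2 + c / 2 = c := by field_simp; ring
      rcases jcases j with rfl | rfl
      · -- parity 0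
        obtain ⟨z, hz⟩ : ∃ z, a * z = b - a - c :=
          ⟨a⁻¹ * (b - a - c), by rw [← mul_assoc, mul_inv_cancel₀ ha, one_mul]⟩
        by_cases hz0 : z = 0
        · -- b = a + c : β(c/2) β(c/2) α(a)
          subst hz0
          have hb : b = a + c := by linear_combination -hz
          refine ⟨[gp p 0 (c/2) (c/2) 1, gp p 0 (c/2) (c/2) 1, gp p a a 0 0], by norm_num,
            listmem3 (beta_mem p hhalf) (beta_mem p hhalf) (alpha_mem p ha), ?_⟩
          simp only [List.prod_cons, List.prod_nil, mul_one, gp_mul]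
          exact gp_congr p (by ring) (by rw [hb]; linear_combination hhsum)
            (by linear_combination hhsum) (by decide)
        · by_cases hx0 : c - z = 0
          · -- z = c, b = a + c + a*c : α(a) β(c/2) β(c/2)
            have hcz : c = z := sub_eq_zero.mp hx0
            rw [← hcz] at hz
            refine ⟨[gp p a a 0 0, gp p 0 (c/2) (c/2) 1, gp p 0 (c/2) (c/2) 1], by norm_num,
              listmem3 (alpha_mem p ha) (beta_mem p hhalf) (beta_mem p hhalf), ?_⟩
            simp only [List.prod_cons, List.prod_nil, mul_one, gp_mul]
            refine gp_congr p (by ring) ?_ (by linear_combination hhsum) (by decide)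
            linear_combination hz + hhsum + a * hhsum
          · -- generic : β(c-z) α(a) β(z)
            refine ⟨[gp p 0 (c-z) (c-z) 1, gp p a a 0 0, gp p 0 z z 1], by norm_num,
              listmem3 (beta_mem p hx0) (alpha_mem p ha) (beta_mem p hz0), ?_⟩
            simp only [List.prod_cons, List.prod_nil, mul_one, gp_mul]
            exact gp_congr p (by ring) (by linear_combination hz) (by ring) (by decide)
      · -- parity 1
        obtain ⟨x, hx⟩ : ∃ x, c * x = b - a - c :=
          ⟨c⁻¹ * (b - a - c), by rw [← mul_assoc, mul_inv_cancel₀ hc, one_mul]⟩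
        by_cases hx0 : x = 0
        · -- b = a + c : β(c) α(a)
          subst hx0
          refine ⟨[gp p 0 c c 1, gp p a a 0 0], by norm_num,
            listmem2 (beta_mem p hc) (alpha_mem p ha), ?_⟩
          simp only [List.prod_cons, List.prod_nil, mul_one, gp_mul]
          exact gp_congr p (by ring) (by linear_combination hx) (by ring) (by decide)
        · by_cases hz0 : a - x = 0
          · -- x = a, b = a + c + a*c : α(a) β(c)
            have hax : a = x := sub_eq_zero.mp hz0
            rw [← hax] at hx
            refine ⟨[gp p a a 0 0, gp p 0 c c 1], by norm_num,
              listmem2 (alpha_mem p ha) (beta_mem p hc), ?_⟩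
            simp only [List.prod_cons, List.prod_nil, mul_one, gp_mul]
            exact gp_congr p (by ring) (by linear_combination hx) (by ring) (by decide)
          · -- generic : α(x) β(c) α(a-x)
            refine ⟨[gp p x x 0 0, gp p 0 c c 1, gp p (a-x) (a-x) 0 0], by norm_num,
              listmem3 (alpha_mem p hx0) (beta_mem p hc) (alpha_mem p hz0), ?_⟩
            simp only [List.prod_cons, List.prod_nil, mul_one, gp_mul]
            exact gp_congr p (by ring) (by linear_combination hx) (by ring) (by decide)

lemma iota_sq (p : ℕ) : gp p 0 0 0 1 * gp p 0 0 0 1 = 1 := by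
  rw [gp_mul, ← gp_one p]
  exact gp_congr p (by ring) (by ring) (by ring) (by decide)

/-- trivial construction for small odd primes -/
lemma small_case (p : ℕ) (hp : p.Prime) (hodd : Odd p) (hple : p ≤ 5) :
    ∃ S : Set (UniTriZ2 p),
      (∀ g ∈ S, ∃ a b c : ZMod p, ∃ j : ZMod 2,
        g = (uniTri p a b c, Multiplicative.ofAdd j)) ∧
      (uniTri p 0 0 0, Multiplicative.ofAdd (0 : ZMod 2)) ∉ S ∧
      (uniTri p 0 0 0, Multiplicative.ofAdd (1 : ZMod 2)) ∉ S ∧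
      (∀ g ∈ S, ∃ h ∈ S, g * h = 1 ∧ h * g = 1) ∧
      (S.ncard : ℝ) ≤ 2 * (p : ℝ) + 250 * (p : ℝ) ^ ((2 : ℝ) / 3) ∧
      ∀ a b c : ZMod p, ∀ j : ZMod 2,
        ∃ l : List (UniTriZ2 p), l.length ≤ 3 ∧ (∀ v ∈ l, v ∈ S) ∧
          l.prod = (uniTri p a b c, Multiplicative.ofAdd j) := by
  haveI : Fact p.Prime := ⟨hp⟩
  haveI : NeZero p := ⟨hp.pos.ne'⟩
  set f : ZMod p × ZMod p × ZMod p × ZMod 2 → UniTriZ2 p :=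
    fun q => gp p q.1 q.2.1 q.2.2.1 q.2.2.2 with hf
  refine ⟨Set.range f \ {gp p 0 0 0 0, gp p 0 0 0 1}, ?_, ?_, ?_, ?_, ?_, ?_⟩
  · rintro g ⟨⟨q, rfl⟩, -⟩
    exact ⟨q.1, q.2.1, q.2.2.1, q.2.2.2, rfl⟩
  · intro hmem
    exact hmem.2 (Or.inl rfl)
  · intro hmem
    exact hmem.2 (Or.inr rfl)
  · rintro g ⟨⟨⟨a, b, c, j⟩, rfl⟩, hg⟩
    simp only [Set.mem_insert_iff, Set.mem_singleton_iff, not_or] at hg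
    obtain ⟨hg1, hg2⟩ := hg
    have hinv1 : f (a, b, c, j) * gp p (-a) (a*c - b) (-c) j = 1 := by
      show gp p a b c j * _ = 1
      rw [gp_mul, ← gp_one p]
      exact gp_congr p (by ring) (by ring) (by ring) (jj_zero j)
    have hinv2 : gp p (-a) (a*c - b) (-c) j * f (a, b, c, j) = 1 := by
      show _ * gp p a b c j = 1
      rw [gp_mul, ← gp_one p]
      exact gp_congr p (by ring) (by ring) (by ring) (jj_zero j)
    refine ⟨gp p (-a) (a*c - b) (-c) j, ⟨⟨(-a, a*c - b, -c, j), rfl⟩, ?_⟩, hinv1, hinv2⟩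
    simp only [Set.mem_insert_iff, Set.mem_singleton_iff, not_or]
    constructor
    · intro h
      apply hg1
      rw [gp_one p]
      have h4 := hinv1
      rw [h, gp_one p, mul_one] at h4
      exact h4
    · intro h
      apply hg2
      have h3 : f (a,b,c,j) = gp p 0 0 0 1 := by
        calc f (a,b,c,j) = f (a,b,c,j) * 1 := (mul_one _).symm
          _ = f (a,b,c,j) * (gp p 0 0 0 1 * gp p 0 0 0 1) := by rw [iota_sq p]
          _ = (f (a,b,c,j) * gp p 0 0 0 1) * gp p 0 0 0 1 := by rw [mul_assoc]
          _ = 1 * gp p 0 0 0 1 := by rw [← h, hinv1]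
          _ = gp p 0 0 0 1 := one_mul _
      exact h3
  · -- cardinality
    have hsub : Set.range f \ {gp p 0 0 0 0, gp p 0 0 0 1} ⊆ Set.range f := Set.diff_subset
    have hfin : (Set.range f).Finite := Set.finite_range f
    have h1 : (Set.range f \ {gp p 0 0 0 0, gp p 0 0 0 1}).ncard ≤ (Set.range f).ncard :=
      Set.ncard_le_ncard hsub hfin
    have h2 : (Set.range f).ncard ≤ Nat.card (ZMod p × ZMod p × ZMod p × ZMod 2) := by
      rw [← Set.image_univ]
      refine le_trans (Set.ncard_image_le (Set.finite_univ)) ?_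
      rw [Set.ncard_univ]
    have h3 : Nat.card (ZMod p × ZMod p × ZMod p × ZMod 2) = p * (p * (p * 2)) := by
      simp [Nat.card_prod, Nat.card_zmod]
    have hp3 : p = 3 ∨ p = 5 := by
      have := hp.two_le
      interval_cases p
      · exact absurd hodd (by decide)
      · exact Or.inl rfl
      · exact absurd hp (by decide)
      · exact Or.inr rfl
    have hple' : (Set.range f \ {gp p 0 0 0 0, gp p 0 0 0 1}).ncard ≤ 250 := by
      rcases hp3 with rfl | rfl <;> omega
    have hp1 : (1 : ℝ) ≤ (p : ℝ) := by
      have := hp.two_le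
      have : (2:ℝ) ≤ (p:ℝ) := by exact_mod_cast this
      linarith
    have hrp : (1 : ℝ) ≤ (p : ℝ) ^ ((2 : ℝ) / 3) := by
      calc (1:ℝ) = (1:ℝ) ^ ((2:ℝ)/3) := (Real.one_rpow _).symm
        _ ≤ (p : ℝ) ^ ((2:ℝ)/3) := Real.rpow_le_rpow (by norm_num) hp1 (by norm_num)
    have hcast : ((Set.range f \ {gp p 0 0 0 0, gp p 0 0 0 1}).ncard : ℝ) ≤ 250 := by
      exact_mod_cast hple'
    have hp0 : (0:ℝ) ≤ (p:ℝ) := by positivity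
    nlinarith
  · -- generation
    intro a b c j
    by_cases h1 : gp p a b c j = gp p 0 0 0 0
    · refine ⟨[], by norm_num, by simp, ?_⟩
      rw [List.prod_nil, ← gp_one p]
      exact h1.symm
    · by_cases h2 : gp p a b c j = gp p 0 0 0 1
      · -- the involution as a product of two
        have hone : (1 : ZMod p) ≠ 0 := one_ne_zero
        refine ⟨[gp p 1 0 0 0, gp p (-1) 0 0 1], by norm_num, ?_, ?_⟩
        · intro v hv
          simp only [List.mem_cons, List.not_mem_nil, or_false] at hv
          rcases hv with rfl | rfl
          · refine ⟨⟨(1, 0, 0, 0), rfl⟩, ?_⟩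
            simp only [Set.mem_insert_iff, Set.mem_singleton_iff, not_or]
            exact ⟨fun h => hone (gp_inj p h).1, fun h => absurd (gp_inj p h).2.2.2 (by decide)⟩
          · refine ⟨⟨(-1, 0, 0, 1), rfl⟩, ?_⟩
            simp only [Set.mem_insert_iff, Set.mem_singleton_iff, not_or]
            refine ⟨fun h => absurd (gp_inj p h).2.2.2 (by decide),
              fun h => hone (neg_eq_zero.mp (gp_inj p h).1)⟩
        · simp only [List.prod_cons, List.prod_nil, mul_one, gp_mul]
          exact (gp_congr p (by ring) (by ring) (by ring) (by decide)).trans h2.symm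
      · refine ⟨[gp p a b c j], by norm_num, ?_, by
          simp only [List.prod_cons, List.prod_nil, mul_one]; rfl⟩
        intro v hv
        simp only [List.mem_singleton] at hv
        subst hv
        refine ⟨⟨(a, b, c, j), rfl⟩, ?_⟩
        simp only [Set.mem_insert_iff, Set.mem_singleton_iff, not_or]
        exact ⟨h1, h2⟩

end MD3

open MD3

/-- There is a constant `C > 0` such that for every odd prime `p` the group
`G = H × ℤ/2ℤ` (of order `2p³`, where `H` is the upper unitriangular subgroup
of `SL(3,p)`) admits an inverse-closed generating set `S` of cardinality at
most `2p + C·p^{2/3}`, containing neither the identity `(I, 0)` nor the unique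
involution `(I, 1)`, such that every element of `G` is a product of at most
`3` elements of `S`; hence `Cay(G,S)` is undirected of diameter at most `3`. -/
theorem matrix_diameter_three :
    ∃ C : ℝ, 0 < C ∧ ∀ p : ℕ, p.Prime → Odd p →
      ∃ S : Set (UniTriZ2 p),
        (∀ g ∈ S, ∃ a b c : ZMod p, ∃ j : ZMod 2,
          g = (uniTri p a b c, Multiplicative.ofAdd j)) ∧
        (uniTri p 0 0 0, Multiplicative.ofAdd (0 : ZMod 2)) ∉ S ∧
        (uniTri p 0 0 0, Multiplicative.ofAdd (1 : ZMod 2)) ∉ S ∧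
        (∀ g ∈ S, ∃ h ∈ S, g * h = 1 ∧ h * g = 1) ∧
        (S.ncard : ℝ) ≤ 2 * (p : ℝ) + C * (p : ℝ) ^ ((2 : ℝ) / 3) ∧
        ∀ a b c : ZMod p, ∀ j : ZMod 2,
          ∃ l : List (UniTriZ2 p), l.length ≤ 3 ∧ (∀ v ∈ l, v ∈ S) ∧
            l.prod = (uniTri p a b c, Multiplicative.ofAdd j) := by
  refine ⟨250, by norm_num, ?_⟩
  intro p hp hodd
  by_cases hp7 : 7 ≤ p
  · -- main construction
    haveI : NeZero p := ⟨hp.pos.ne'⟩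
    refine ⟨(bigS p : Set (UniTriZ2 p)), ?_, ?_, ?_, ?_, ?_, ?_⟩
    · intro g hg
      obtain ⟨a, b, c, j, h⟩ := bigS_shape p (Finset.mem_coe.1 hg)
      exact ⟨a, b, c, j, h⟩
    · exact fun h => one_not_mem p hp hp7 (Finset.mem_coe.1 h)
    · exact fun h => iota_not_mem p hp hp7 (Finset.mem_coe.1 h)
    · intro g hg
      obtain ⟨h, hh, h1, h2⟩ := inv_closed p hp g (Finset.mem_coe.1 hg)
      exact ⟨h, Finset.mem_coe.2 hh, h1, h2⟩
    · -- cardinality bound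
      rw [Set.ncard_coe_finset]
      have hcard : (bigS p).card ≤ 2 * p + 12 * (p.sqrt + 1) := bigS_card p
      have hcast : ((bigS p).card : ℝ) ≤ 2 * (p:ℝ) + 12 * ((p.sqrt : ℝ) + 1) := by
        have := (Nat.cast_le (α := ℝ)).2 hcard
        push_cast at this
        linarith
      have hp1 : (1:ℝ) ≤ (p:ℝ) := by
        have := hp.two_le
        have h2 : (2:ℝ) ≤ (p:ℝ) := by exact_mod_cast this
        linarith
      have hs1 : ((p.sqrt : ℝ)) ≤ (p:ℝ) ^ ((2:ℝ)/3) := by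
        calc ((p.sqrt : ℝ)) ≤ Real.sqrt p := Real.nat_sqrt_le_real_sqrt
          _ = (p:ℝ) ^ ((1:ℝ)/2) := by rw [Real.sqrt_eq_rpow]
          _ ≤ (p:ℝ) ^ ((2:ℝ)/3) := Real.rpow_le_rpow_of_exponent_le hp1 (by norm_num)
      have hs2 : (1:ℝ) ≤ (p:ℝ) ^ ((2:ℝ)/3) := by
        calc (1:ℝ) = (1:ℝ) ^ ((2:ℝ)/3) := (Real.one_rpow _).symm
          _ ≤ (p:ℝ) ^ ((2:ℝ)/3) := Real.rpow_le_rpow (by norm_num) hp1 (by norm_num)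
      linarith
    · intro a b c j
      obtain ⟨l, hlen, hmem, hprod⟩ := gen p hp hodd hp7 a b c j
      exact ⟨l, hlen, fun v hv => Finset.mem_coe.2 (hmem v hv), hprod⟩
  · -- small primes
    have h5 : p ≤ 5 := by
      push_neg at hp7
      have h2 := hp.two_le
      interval_cases p
      · exact absurd hodd (by decide)
      · omega
      · exact absurd hp (by decide)
      · omega
      · exact absurd hp (by decide)
    exact small_case p hp hodd h5
end
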